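/- arXiv:2103.12598 — 8 statements merged into one kernel-verified Lean document; each statement's English description precedes it below -/
import Mathlib

section
/- The border rank of the Strassen tensor T_{STR,n} (for n ≥ 1) equals exactly n + 1. -/
/-
Upper bound (Strassen): `T_{STR,n} + t ∑ u_i ⊗ v_i ⊗ w_i` is the rank-`(n+1)` tensor
`t⁻¹ ∑ (u_0 + t u_i) ⊗ (v_0 + t v_i) ⊗ w_i - t⁻¹ u_0 ⊗ v_0 ⊗ (∑ w_i)`.
Lower bound: an `m × m` minor of a flattening is a polynomial in the tensor which vanishes on
tensors of rank `< m` (the flattening then factors through `ℂ^r`), hence also on their closure;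
the flattening `A* → B ⊗ C` of `T_{STR,n}` has the identity as an `(n+1) × (n+1)` minor.
-/

/-- Coordinates of the basis vector `e i` of `Fin m → ℂ`. -/
noncomputable def basisVec {m : ℕ} (i : Fin m) : Fin m → ℂ :=
  fun j => if j = i then 1 else 0

/-- The Strassen tensor `T_{STR,n}` in coordinates. -/
noncomputable def TSTR (n : ℕ) : Fin (n+1) × Fin (n+1) × Fin n → ℂ :=
  fun p => ∑ i : Fin n,
      basisVec (0 : Fin (n+1)) p.1 * basisVec i.succ p.2.1 * basisVec i p.2.2
    + ∑ i : Fin n,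
      basisVec i.succ p.1 * basisVec (0 : Fin (n+1)) p.2.1 * basisVec i p.2.2

/-- The set of tensors in `ℂ^a ⊗ ℂ^b ⊗ ℂ^c` (in coordinates) of rank at most r. -/
def rankAtMost (a b c r : ℕ) : Set (Fin a × Fin b × Fin c → ℂ) :=
  {T | ∃ (u : Fin r → Fin a → ℂ) (v : Fin r → Fin b → ℂ) (w : Fin r → Fin c → ℂ),
    T = fun p => ∑ s : Fin r, u s p.1 * v s p.2.1 * w s p.2.2}

open Matrix Filter Topology

lemma sum_mul_basisVec {m : ℕ} (f : Fin m → ℂ) (k : Fin m) :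
    ∑ i, f i * basisVec i k = f k := by
  simp [basisVec]

lemma TSTR_apply (n : ℕ) (a b : Fin (n+1)) (k : Fin n) :
    TSTR n (a, b, k) = basisVec 0 a * basisVec k.succ b + basisVec k.succ a * basisVec 0 b := by
  simp only [TSTR]
  rw [sum_mul_basisVec (fun i => basisVec 0 a * basisVec i.succ b),
    sum_mul_basisVec (fun i => basisVec i.succ a * basisVec 0 b)]

lemma det_of_sum_mul_eq_zero {K : Type*} [Field K] {m r : ℕ} (hr : r < m)
    (x y : Fin r → Fin m → K) : (of fun i j => ∑ s, x s i * y s j).det = 0 := by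
  have hfactor : (of fun i j => ∑ s, x s i * y s j) = (of fun i s => x s i) * of y := by
    ext i j; simp [mul_apply]
  by_contra hdet
  have hfull := rank_of_isUnit _ ((isUnit_iff_isUnit_det _).mpr (Ne.isUnit hdet))
  have hle := (rank_mul_le_left (of fun i s => x s i) (of y)).trans (rank_le_card_width _)
  rw [← hfactor, hfull] at hle
  simp only [Fintype.card_fin] at hle
  omega

lemma le_of_det_ne_zero_of_mem_closure_rankAtMost {a b c r m : ℕ}
    (row : Fin m → Fin a) (col : Fin m → Fin b × Fin c) {T : Fin a × Fin b × Fin c → ℂ}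
    (hdet : (of fun i j => T (row i, col j)).det ≠ 0) (hT : T ∈ closure (rankAtMost a b c r)) :
    m ≤ r := by
  by_contra! hr
  have hcont : Continuous fun T : Fin a × Fin b × Fin c → ℂ =>
      (of fun i j => T (row i, col j)).det := by
    fun_prop
  refine hdet (closure_minimal ?_ (isClosed_eq hcont continuous_const) hT)
  rintro _ ⟨u, v, w, rfl⟩
  simpa only [Set.mem_ofPred_eq, mul_assoc] using
    det_of_sum_mul_eq_zero hr (fun s i => u s (row i)) fun s j => v s (col j).1 * w s (col j).2

lemma mem_closure_of_forall_add_smul_mem {𝕜 E : Type*} [NontriviallyNormedField 𝕜]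
    [AddCommGroup E] [Module 𝕜 E] [TopologicalSpace E] [ContinuousAdd E] [ContinuousSMul 𝕜 E]
    {S : Set E} {x y : E} (h : ∀ t : 𝕜, t ≠ 0 → x + t • y ∈ S) : x ∈ closure S := by
  have hlim : Tendsto (fun t : 𝕜 => x + t • y) (𝓝[≠] 0) (𝓝 x) := by
    have hcont : Continuous fun t : 𝕜 => x + t • y :=
      continuous_const.add (continuous_id.smul continuous_const)
    simpa using (hcont.tendsto 0).mono_left nhdsWithin_le_nhds
  exact mem_closure_of_tendsto hlim (eventually_nhdsWithin_of_forall h)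

-- `∑ i, u_i ⊗ v_i ⊗ w_i` in coordinates
noncomputable def strassenCorrection (n : ℕ) : Fin (n+1) × Fin (n+1) × Fin n → ℂ :=
  fun p => basisVec p.2.2.succ p.1 * basisVec p.2.2.succ p.2.1

lemma TSTR_add_smul_mem_rankAtMost (n : ℕ) {t : ℂ} (ht : t ≠ 0) :
    TSTR n + t • strassenCorrection n ∈ rankAtMost (n+1) (n+1) n (n+1) := by
  refine ⟨Fin.snoc (fun i => basisVec 0 + t • basisVec i.succ) (basisVec 0),
    Fin.snoc (fun i => basisVec 0 + t • basisVec i.succ) (basisVec 0),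
    Fin.snoc (fun i => t⁻¹ • basisVec i) (fun _ => -t⁻¹), ?_⟩
  funext ⟨a, b, k⟩
  simp only [Fin.sum_univ_castSucc, Fin.snoc_castSucc, Fin.snoc_last, Pi.add_apply,
    Pi.smul_apply, smul_eq_mul, TSTR_apply, strassenCorrection, ← mul_assoc, sum_mul_basisVec]
  field_simp
  ring

-- The columns `v_1 ⊗ w_1, v_0 ⊗ w_1, …, v_0 ⊗ w_n` of the flattening `A* → B ⊗ C`.
def strassenColumn {n : ℕ} (hn : 1 ≤ n) : Fin (n+1) → Fin (n+1) × Fin n :=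
  Fin.cases (Fin.succ ⟨0, hn⟩, ⟨0, hn⟩) fun k => (0, k)

lemma TSTR_minor_eq_one {n : ℕ} (hn : 1 ≤ n) :
    (of fun i j => TSTR n (i, strassenColumn hn j)) = 1 := by
  ext i j
  cases j using Fin.cases <;> cases i using Fin.cases <;>
    simp [strassenColumn, TSTR_apply, basisVec, one_apply, Ne.symm (Fin.succ_ne_zero _)]

/-- The border rank of the Strassen tensor (n ≥ 1) equals exactly n + 1: T_{STR,n}
is a limit of tensors of rank ≤ n+1, and is not a limit of tensors of rank ≤ r for
any r < n+1. -/
theorem stmt6 (n : ℕ) (hn : 1 ≤ n) :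
    TSTR n ∈ closure (rankAtMost (n+1) (n+1) n (n+1)) ∧
    ∀ r : ℕ, TSTR n ∈ closure (rankAtMost (n+1) (n+1) n r) → n + 1 ≤ r := by
  refine ⟨mem_closure_of_forall_add_smul_mem fun t ht => TSTR_add_smul_mem_rankAtMost n ht,
    fun r hr => le_of_det_ne_zero_of_mem_closure_rankAtMost id (strassenColumn hn) ?_ hr⟩
  simpa only [id, TSTR_minor_eq_one, det_one] using one_ne_zero
end

section
/- In the polynomial ring ℂ[E_{1,n}, E_{1,1}, E_{n,n}, E_{1,2}, …, E_{1,n−1}, E_{2,n}, …, E_{n−1,n}], the cubic Σ_{j=1}^n E_{1,n}·E_{1,j}·E_{j,n}, whose j=1 and j=n terms combine to E_{1,n}²·(E_{1,1}+E_{n,n}), equals, after the linear change of variables E_{1,n} = 3x_0, E_{1,1} + E_{n,n} = x_{2n−3}/3, E_{1,j} = x_{2j−3} + i·x_{2j−2}, E_{j,n} = x_{2j−3} − i·x_{2j−2} for 2 ≤ j ≤ n−1, the Coppersmith–Winograd cubic T_{CW,2n−4} = 3x_0²x_{2n−3} + 3·Σ_{k=1}^{2n−4} x_0·x_k². -/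
open MvPolynomial

lemma sum_reindex_aux {M : Type*} [AddCommMonoid M] (f : ℕ → M) :
    ∀ n, 3 ≤ n → ∑ j ∈ Finset.Icc 2 (n - 1), (f (2*j - 3) + f (2*j - 2))
      = ∑ k ∈ Finset.Icc 1 (2*n - 4), f k := by
  intro n hn
  induction n, hn using Nat.le_induction with
  | base =>
    show ∑ j ∈ Finset.Icc 2 2, _ = ∑ k ∈ Finset.Icc 1 2, _
    rw [show Finset.Icc 2 2 = {2} from rfl, show Finset.Icc 1 2 = {1, 2} from rfl]
    simp
  | succ n hn ih =>
    have h1 : (n + 1) - 1 = n := rfl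
    have h2 : Finset.Icc 2 n = insert n (Finset.Icc 2 (n - 1)) := by
      have hico : Finset.Ico 2 n = Finset.Icc 2 (n-1) := by
        rw [← Finset.Ico_add_one_right_eq_Icc]; congr 1; omega
      rw [← Finset.Ico_insert_right (by omega : 2 ≤ n), hico]
    have h3 : 2*(n+1) - 4 = (2*n - 4) + 1 + 1 := by omega
    rw [h1, h2, Finset.sum_insert (by simp; omega), h3,
      Finset.sum_Icc_succ_top (by omega), Finset.sum_Icc_succ_top (by omega), ih]
    have e1 : 2*n - 3 = 2*n - 4 + 1 := by omega
    have e2 : 2*n - 2 = 2*n - 4 + 1 + 1 := by omega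
    rw [e1, e2]
    abel

/-- Under the substitution E_{1,n} = 3x_0, E_{1,1}+E_{n,n} = x_{2n−3}/3,
E_{1,j} = x_{2j−3} + i·x_{2j−2}, E_{j,n} = x_{2j−3} − i·x_{2j−2} (2 ≤ j ≤ n−1),
the cubic Σ_{j=1}^n E_{1,n}·E_{1,j}·E_{j,n} = E_{1,n}²·(E_{1,1}+E_{n,n}) +
Σ_{j=2}^{n−1} E_{1,n}·E_{1,j}·E_{j,n} becomes the Coppersmith–Winograd cubic
T_{CW,2n−4} = 3x_0²x_{2n−3} + 3·Σ_{k=1}^{2n−4} x_0·x_k². -/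
theorem stmt8 (n : ℕ) (hn : 3 ≤ n) :
    ((C 3 * X 0) ^ 2 * (C (1/3 : ℂ) * X (2*n - 3))
      + ∑ j ∈ Finset.Icc 2 (n - 1),
          (C 3 * X 0) * (X (2*j - 3) + C Complex.I * X (2*j - 2))
            * (X (2*j - 3) - C Complex.I * X (2*j - 2))
      : MvPolynomial ℕ ℂ)
    = C 3 * (X 0) ^ 2 * X (2*n - 3)
      + C 3 * ∑ k ∈ Finset.Icc 1 (2*n - 4), X 0 * (X k) ^ 2 := by
  have hI : (C Complex.I : MvPolynomial ℕ ℂ) ^ 2 = -1 := by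
    rw [← C_pow, Complex.I_sq, map_neg, map_one]
  have hterm : ∀ a b : ℕ, ((C 3 * X 0) * (X a + C Complex.I * X b)
      * (X a - C Complex.I * X b) : MvPolynomial ℕ ℂ)
      = C 3 * (X 0 * (X a)^2 + X 0 * (X b)^2) := by
    intro a b
    linear_combination (-(C 3 * X 0 * (X b)^2) : MvPolynomial ℕ ℂ) * hI
  have h1 : ((C 3 * X 0) ^ 2 * (C (1/3 : ℂ) * X (2*n - 3)) : MvPolynomial ℕ ℂ)
      = C 3 * (X 0) ^ 2 * X (2*n - 3) := by
    have h3 : ((C 3 : MvPolynomial ℕ ℂ)) ^ 2 * C (1/3) = C 3 := by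
      rw [← C_pow, ← C_mul]; norm_num
    linear_combination (X 0 : MvPolynomial ℕ ℂ)^2 * X (2*n-3) * h3
  simp only [hterm]
  rw [h1, Finset.mul_sum, ← sum_reindex_aux (fun k => (C 3 * (X 0 * (X k)^2) : MvPolynomial ℕ ℂ)) n hn]
  simp [mul_add, Finset.mul_sum]
end

section
/- Let T_{0,t} = 3(a_1+t b_1)³ + 6(a_2+t b_2)³ + (a_1−2a_2)³ − 3(a_1−a_2+t b_0)³ − (a_1+a_2−3t b_0)³ in ℂ[a_1,a_2,b_0,b_1,b_2]. Then lim_{t→0} T_{0,t}/t = 36·a_1 a_2 b_0 + 9·a_1² b_1 + 18·a_2² b_2. Equivalently, as polynomials in t, T_{0,t} = t·(36 a_1 a_2 b_0 + 9 a_1² b_1 + 18 a_2² b_2) + O(t²). In particular this cubic has border Waring rank at most 5. -/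
open MvPolynomial

/-- With variables a₁ = X 0, a₂ = X 1, b₀ = X 2, b₁ = X 3, b₂ = X 4 and the
parameter t = X 5, the family
T_{0,t} = 3(a₁+tb₁)³ + 6(a₂+tb₂)³ + (a₁−2a₂)³ − 3(a₁−a₂+tb₀)³ − (a₁+a₂−3tb₀)³
satisfies T_{0,t} = t·(36a₁a₂b₀ + 9a₁²b₁ + 18a₂²b₂) + O(t²); equivalently
lim_{t→0} T_{0,t}/t = 36a₁a₂b₀ + 9a₁²b₁ + 18a₂²b₂. In particular this cubic
(T_{HW,0} up to rescaling variables) has border Waring rank at most 5. -/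
theorem stmt9 :
    ∃ R : MvPolynomial (Fin 6) ℂ,
      (C 3 * (X 0 + X 5 * X 3) ^ 3
        + C 6 * (X 1 + X 5 * X 4) ^ 3
        + (X 0 - C 2 * X 1) ^ 3
        - C 3 * (X 0 - X 1 + X 5 * X 2) ^ 3
        - (X 0 + X 1 - C 3 * X 5 * X 2) ^ 3
        : MvPolynomial (Fin 6) ℂ)
      = X 5 * (C 36 * X 0 * X 1 * X 2 + C 9 * (X 0) ^ 2 * X 3
          + C 18 * (X 1) ^ 2 * X 4)
        + (X 5) ^ 2 * R := by
  refine ⟨C 9 * X 0 * (X 3) ^ 2 + C 18 * X 1 * (X 4) ^ 2 - C 36 * X 0 * (X 2) ^ 2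
      - C 18 * X 1 * (X 2) ^ 2
      + X 5 * (C 3 * (X 3) ^ 3 + C 6 * (X 4) ^ 3 + C 24 * (X 2) ^ 3), ?_⟩
  push_cast [map_ofNat]
  ring
end

section
/- Let T_{1,t} = (−a_1−a_2+t³b_0)³ + (1/3)(−a_1+a_2)³ + (a_1−t²y_1+t³b_1)³ + (1/3)(a_1−a_2+3tx_1−3t³b_0)³ + (1/4)(2a_2−2tx_1−t²z_1+t³b_2)³ + (−a_1−2tx_1+t²y_1)³ + (1/4)(−2a_2+t²z_1)³ + (a_1+a_2+tx_1)³. Then lim_{t→0} T_{1,t}/t³ = 12a_1a_2b_0 + 3a_1²b_1 + 3a_2²b_2 + 12a_1x_1y_1 + 6a_2x_1z_1; i.e., as a polynomial in t, T_{1,t} equals t³·(12a_1a_2b_0 + 3a_1²b_1 + 3a_2²b_2 + 12a_1x_1y_1 + 6a_2x_1z_1) + O(t⁴). In particular this cubic (which is T_{HW,1} up to rescaling variables) has border Waring rank at most 8. -/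
open MvPolynomial

set_option maxHeartbeats 4000000 in
/-- With variables a₁ = X 0, a₂ = X 1, x₁ = X 2, y₁ = X 3, z₁ = X 4, b₀ = X 5,
b₁ = X 6, b₂ = X 7 and the parameter t = X 8, the family
T_{1,t} = (−a₁−a₂+t³b₀)³ + (1/3)(−a₁+a₂)³ + (a₁−t²y₁+t³b₁)³
  + (1/3)(a₁−a₂+3tx₁−3t³b₀)³ + (1/4)(2a₂−2tx₁−t²z₁+t³b₂)³
  + (−a₁−2tx₁+t²y₁)³ + (1/4)(−2a₂+t²z₁)³ + (a₁+a₂+tx₁)³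
satisfies T_{1,t} = t³·(12a₁a₂b₀ + 3a₁²b₁ + 3a₂²b₂ + 12a₁x₁y₁ + 6a₂x₁z₁) + O(t⁴);
equivalently lim_{t→0} T_{1,t}/t³ is that cubic. In particular this cubic
(T_{HW,1} up to rescaling variables) has border Waring rank at most 8. -/
theorem stmt10 :
    ∃ R : MvPolynomial (Fin 9) ℂ,
      ((-(X 0) - X 1 + (X 8) ^ 3 * X 5) ^ 3
        + C (1/3 : ℂ) * (-(X 0) + X 1) ^ 3
        + (X 0 - (X 8) ^ 2 * X 3 + (X 8) ^ 3 * X 6) ^ 3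
        + C (1/3 : ℂ) * (X 0 - X 1 + C 3 * X 8 * X 2 - C 3 * (X 8) ^ 3 * X 5) ^ 3
        + C (1/4 : ℂ) * (C 2 * X 1 - C 2 * X 8 * X 2 - (X 8) ^ 2 * X 4
            + (X 8) ^ 3 * X 7) ^ 3
        + (-(X 0) - C 2 * X 8 * X 2 + (X 8) ^ 2 * X 3) ^ 3
        + C (1/4 : ℂ) * (-(C 2 * X 1) + (X 8) ^ 2 * X 4) ^ 3
        + (X 0 + X 1 + X 8 * X 2) ^ 3
        : MvPolynomial (Fin 9) ℂ)
      = (X 8) ^ 3 * (C 12 * X 0 * X 1 * X 5 + C 3 * (X 0) ^ 2 * X 6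
          + C 3 * (X 1) ^ 2 * X 7 + C 12 * X 0 * X 2 * X 3
          + C 6 * X 1 * X 2 * X 4)
        + (X 8) ^ 4 * R := by
  use C (1/4 : ℂ) * (X 7) ^ 3 * (X 8) ^ 5 + C (1 : ℂ) * (X 6) ^ 3 * (X 8) ^ 5 + C (-8 : ℂ) * (X 5) ^ 3 * (X 8) ^ 5 + C (-3/4 : ℂ) * X 4 * (X 7) ^ 2 * (X 8) ^ 4 + C (3/4 : ℂ) * (X 4) ^ 2 * X 7 * (X 8) ^ 3 + C (-3 : ℂ) * X 3 * (X 6) ^ 2 * (X 8) ^ 4 + C (3 : ℂ) * (X 3) ^ 2 * X 6 * (X 8) ^ 3 + C (-3/2 : ℂ) * X 2 * (X 7) ^ 2 * (X 8) ^ 3 + C (27 : ℂ) * X 2 * (X 5) ^ 2 * (X 8) ^ 3 + C (3 : ℂ) * X 2 * X 4 * X 7 * (X 8) ^ 2 + C (-3/2 : ℂ) * X 2 * (X 4) ^ 2 * X 8 + C (-6 : ℂ) * X 2 * (X 3) ^ 2 * X 8 + C (3 : ℂ) * (X 2) ^ 2 * X 7 * X 8 + C (-27 : ℂ) * (X 2)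 ^ 2 * X 5 * X 8 + C (-3 : ℂ) * (X 2) ^ 2 * X 4 + C (12 : ℂ) * (X 2) ^ 2 * X 3 + C (3/2 : ℂ) * X 1 * (X 7) ^ 2 * (X 8) ^ 2 + C (-12 : ℂ) * X 1 * (X 5) ^ 2 * (X 8) ^ 2 + C (-3 : ℂ) * X 1 * X 4 * X 7 * X 8 + C (-6 : ℂ) * X 1 * X 2 * X 7 + C (18 : ℂ) * X 1 * X 2 * X 5 + C (3 : ℂ) * X 0 * (X 6) ^ 2 * (X 8) ^ 2 + C (6 : ℂ) * X 0 * (X 5) ^ 2 * (X 8) ^ 2 + C (-6 : ℂ) * X 0 * X 3 * X 6 * X 8 + C (-18 : ℂ) * X 0 * X 2 * X 5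
  apply MvPolynomial.funext
  intro x
  simp only [map_add, map_mul, map_pow, map_neg, map_sub, eval_C, eval_X]
  ring
end

section
/- Let A be the (n+2)-dimensional commutative ℂ-algebra with basis a_0, a_1, …, a_{n+1}, unit a_0, and multiplication a_i·a_i = a_{n+1} for 1 ≤ i ≤ n, a_i·a_j = 0 for 1 ≤ i < j ≤ n+1, a_{n+1}·a_{n+1} = 0. Then the multiplication tensor of A, expressed in the dual basis {α_i} and basis {a_i}, equals α_0⊗α_0⊗a_0 + Σ_{i=1}^{n+1}(α_0⊗α_i⊗a_i + α_i⊗α_0⊗a_i) + Σ_{i=1}^n α_i⊗α_i⊗a_{n+1}, i.e., the Coppersmith–Winograd tensor T_{CW,n}. -/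
open Finset

/-- Structure constants of the algebra A with basis a₀,…,a_{n+1}, unit a₀,
aᵢ·aᵢ = a_{n+1} for 1 ≤ i ≤ n, aᵢ·aⱼ = 0 for 1 ≤ i < j ≤ n+1 (and symmetrically),
a_{n+1}² = 0: `structConst n i j k` is the coefficient of a_k in aᵢ·aⱼ. -/
noncomputable def structConst (n : ℕ) (i j k : Fin (n+2)) : ℂ :=
  if i = 0 then (if j = k then 1 else 0)
  else if j = 0 then (if i = k then 1 else 0)
  else if i = j ∧ (i : ℕ) ≤ n ∧ k = Fin.last (n+1) then 1 else 0

/-- The induced multiplication on `ℂ^{n+2}`. -/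
noncomputable def mulA (n : ℕ) (u v : Fin (n+2) → ℂ) : Fin (n+2) → ℂ :=
  fun k => ∑ i : Fin (n+2), ∑ j : Fin (n+2), u i * v j * structConst n i j k

noncomputable def Saux (n : ℕ) (u v : Fin (n+2) → ℂ) : ℂ :=
  ∑ i ∈ Finset.univ.filter (fun i : Fin (n+2) => 1 ≤ (i:ℕ) ∧ (i:ℕ) ≤ n), u i * v i

lemma structConst_split (n : ℕ) (i j k : Fin (n+2)) :
    structConst n i j k =
      (if i = 0 then (if j = k then 1 else 0) else 0)
      + (if ¬ i = 0 ∧ j = 0 then (if i = k then 1 else 0) else 0)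
      + (if ¬ i = 0 ∧ ¬ j = 0 ∧ i = j ∧ (i : ℕ) ≤ n ∧ k = Fin.last (n+1) then 1 else 0) := by
  unfold structConst
  split_ifs <;> simp_all <;> first | tauto | omega

lemma mulA_eq (n : ℕ) (u v : Fin (n+2) → ℂ) (k : Fin (n+2)) :
    mulA n u v k = u 0 * v k + (if k = 0 then 0 else u k * v 0)
      + (if k = Fin.last (n+1) then Saux n u v else 0) := by
  unfold mulA Saux
  simp only [structConst_split, mul_add, Finset.sum_add_distrib]
  congr 1
  · congr 1
    · have inner : ∀ i : Fin (n+2),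
          ∑ j : Fin (n+2), u i * v j * (if i = 0 then (if j = k then (1:ℂ) else 0) else 0)
            = if i = 0 then u i * v k else 0 := by
        intro i; by_cases hi : i = 0 <;> simp [hi, mul_ite, Finset.sum_ite_eq']
      rw [Finset.sum_congr rfl (fun i _ => inner i), Finset.sum_ite_eq' Finset.univ (0 : Fin (n+2))]
      simp
    · have inner : ∀ i : Fin (n+2),
          ∑ j : Fin (n+2), u i * v j * (if ¬ i = 0 ∧ j = 0 then (if i = k then (1:ℂ) else 0) else 0)
            = if ¬ i = 0 ∧ i = k then u i * v 0 else 0 := by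
        intro i
        rw [Finset.sum_eq_single (0 : Fin (n+2))]
        · by_cases hi : i = 0 <;> by_cases hik : i = k <;> simp [hi, hik]
        · intro j _ hj; simp [hj]
        · simp
      rw [Finset.sum_congr rfl (fun i _ => inner i)]
      by_cases hk : k = 0
      · subst hk; simp
      · rw [Finset.sum_eq_single k]
        · simp [hk]
        · intro i _ hi; simp [hi]
        · simp
  · have inner : ∀ i : Fin (n+2),
        ∑ j : Fin (n+2), u i * v j *
          (if ¬ i = 0 ∧ ¬ j = 0 ∧ i = j ∧ (i : ℕ) ≤ n ∧ k = Fin.last (n+1) then (1:ℂ) else 0)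
          = if (1 ≤ (i:ℕ) ∧ (i:ℕ) ≤ n) ∧ k = Fin.last (n+1) then u i * v i else 0 := by
      intro i
      rw [Finset.sum_eq_single i]
      · by_cases hi : i = 0
        · simp [hi]
        · have : 1 ≤ (i:ℕ) := Nat.one_le_iff_ne_zero.mpr (fun h => hi (Fin.ext (by simpa using h)))
          simp [hi, this, and_assoc]
      · intro j _ hj
        have : ¬ i = j := fun h => hj h.symm
        simp [this]
      · simp
    rw [Finset.sum_congr rfl (fun i _ => inner i)]
    by_cases hk : k = Fin.last (n+1) <;> simp [hk, Finset.sum_filter]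

lemma last_ne_zero (n : ℕ) : (Fin.last (n+1) : Fin (n+2)) ≠ 0 := by
  simp [Fin.ext_iff]

lemma mem_filter_facts {n : ℕ} {i : Fin (n+2)}
    (h : i ∈ Finset.univ.filter (fun i : Fin (n+2) => 1 ≤ (i:ℕ) ∧ (i:ℕ) ≤ n)) :
    i ≠ 0 ∧ i ≠ Fin.last (n+1) := by
  simp only [Finset.mem_filter, Finset.mem_univ, true_and] at h
  constructor
  · intro h0; subst h0; simp at h
  · intro h0; subst h0; simp at h

lemma Saux_comm (n : ℕ) (u v : Fin (n+2) → ℂ) : Saux n u v = Saux n v u := by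
  unfold Saux; exact Finset.sum_congr rfl fun i _ => mul_comm _ _

lemma Saux_mulA_left (n : ℕ) (u v w : Fin (n+2) → ℂ) :
    Saux n (mulA n u v) w = u 0 * Saux n v w + v 0 * Saux n u w := by
  unfold Saux
  rw [Finset.mul_sum, Finset.mul_sum, ← Finset.sum_add_distrib]
  refine Finset.sum_congr rfl fun i hi => ?_
  obtain ⟨h0, hl⟩ := mem_filter_facts hi
  rw [mulA_eq]; simp [h0, hl]; ring

lemma Saux_mulA_right (n : ℕ) (u v w : Fin (n+2) → ℂ) :
    Saux n u (mulA n v w) = v 0 * Saux n u w + w 0 * Saux n u v := by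
  unfold Saux
  rw [Finset.mul_sum, Finset.mul_sum, ← Finset.sum_add_distrib]
  refine Finset.sum_congr rfl fun i hi => ?_
  obtain ⟨h0, hl⟩ := mem_filter_facts hi
  rw [mulA_eq]; simp [h0, hl]; ring

/-- The stated rules define a commutative associative algebra with unit a₀, and its
multiplication tensor equals
α₀⊗α₀⊗a₀ + Σ_{l=1}^{n+1}(α₀⊗α_l⊗a_l + α_l⊗α₀⊗a_l) + Σ_{l=1}^{n} α_l⊗α_l⊗a_{n+1},
i.e. the Coppersmith–Winograd tensor T_{CW,n}. -/
theorem stmt11 (n : ℕ) :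
    (∀ u v : Fin (n+2) → ℂ, mulA n u v = mulA n v u) ∧
    (∀ u v w : Fin (n+2) → ℂ, mulA n (mulA n u v) w = mulA n u (mulA n v w)) ∧
    (∀ u : Fin (n+2) → ℂ,
      mulA n (fun i => if i = 0 then 1 else 0) u = u) ∧
    (∀ i j k : Fin (n+2), structConst n i j k =
      (if i = 0 ∧ j = 0 ∧ k = 0 then 1 else 0)
      + ∑ l ∈ Finset.univ.filter (fun l : Fin (n+2) => 1 ≤ (l : ℕ)),
          ((if i = 0 ∧ j = l ∧ k = l then 1 else 0)
            + (if i = l ∧ j = 0 ∧ k = l then 1 else 0))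
      + ∑ l ∈ Finset.univ.filter (fun l : Fin (n+2) => 1 ≤ (l : ℕ) ∧ (l : ℕ) ≤ n),
          (if i = l ∧ j = l ∧ k = Fin.last (n+1) then 1 else 0)) := by
  refine ⟨?_, ?_, ?_, ?_⟩
  · intro u v; funext k
    rw [mulA_eq, mulA_eq, Saux_comm]
    by_cases hk : k = 0 <;> simp [hk] <;> ring
  · intro u v w; funext k
    have hl0 := last_ne_zero n
    simp only [mulA_eq, Saux_mulA_left, Saux_mulA_right, if_neg hl0]
    by_cases hk : k = 0 <;> by_cases hk2 : k = Fin.last (n+1) <;>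
      simp_all <;> ring
  · intro u; funext k
    rw [mulA_eq]
    have hS : Saux n (fun i => if i = (0:Fin (n+2)) then (1:ℂ) else 0) u = 0 := by
      apply Finset.sum_eq_zero
      intro i hi
      simp [(mem_filter_facts hi).1]
    rw [hS]
    by_cases hk : k = 0 <;> simp [hk]
  · intro i j k
    have hA : ∀ l : Fin (n+2), (if i = 0 ∧ j = l ∧ k = l then (1:ℂ) else 0)
        = if l = j then (if i = 0 ∧ k = j then 1 else 0) else 0 := by
      intro l; by_cases h : l = j
      · subst h; by_cases h1 : i = 0 <;> by_cases h2 : k = l <;> simp [h1, h2]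
      · have : ¬ j = l := fun h' => h h'.symm
        simp [h, this]
    have hB : ∀ l : Fin (n+2), (if i = l ∧ j = 0 ∧ k = l then (1:ℂ) else 0)
        = if l = i then (if j = 0 ∧ k = i then 1 else 0) else 0 := by
      intro l; by_cases h : l = i
      · subst h; by_cases h1 : j = 0 <;> by_cases h2 : k = l <;> simp [h1, h2]
      · have : ¬ i = l := fun h' => h h'.symm
        simp [h, this]
    have hC : ∀ l : Fin (n+2), (if i = l ∧ j = l ∧ k = Fin.last (n+1) then (1:ℂ) else 0)
        = if l = i then (if j = i ∧ k = Fin.last (n+1) then 1 else 0) else 0 := by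
      intro l; by_cases h : l = i
      · subst h; simp
      · have : ¬ i = l := fun h' => h h'.symm
        simp [h, this]
    simp only [hA, hB, hC, Finset.sum_add_distrib, Finset.sum_ite_eq',
      Finset.mem_filter, Finset.mem_univ, true_and]
    have hpos : ∀ a : Fin (n+2), a ≠ 0 → 1 ≤ (a:ℕ) := fun a ha =>
      Nat.one_le_iff_ne_zero.mpr (fun h => ha (Fin.ext (by simpa using h)))
    have hpos0 : ¬ (1:ℕ) ≤ ((0 : Fin (n+2)):ℕ) := by simp
    unfold structConst
    by_cases hi : i = 0
    · subst hi
      by_cases hj : j = 0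
      · subst hj
        by_cases hk : k = 0 <;> simp [hk, hpos0, eq_comm]
      · have h1 := hpos j hj
        by_cases hk : j = k
        · subst hk; have hj2 : ¬ (0:Fin (n+2)) = j := fun h => hj h.symm; simp [hj, h1, hj2]
        · have hk' : ¬ k = j := fun h => hk h.symm
          simp [hj, hk, hk', h1, hpos0]
    · by_cases hj : j = 0
      · subst hj
        have h1 := hpos i hi
        have hi' : ¬ (0 : Fin (n+2)) = i := fun h => hi h.symm
        by_cases hk : i = k
        · subst hk; simp [hi, h1, hi']
        · have hk' : ¬ k = i := fun h => hk h.symm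
          simp [hi, hk, hk', h1, hi', hpos0]
      · have h1 := hpos i hi
        have h2 := hpos j hj
        by_cases hij : i = j <;> by_cases hn : (i:ℕ) ≤ n <;>
          by_cases hk : k = Fin.last (n+1) <;>
            simp [hi, hj, hij, hn, hk, h1, h2, eq_comm]
end

section
/- Let A = ℂ[a_1,…,a_{3m+2}]/I, where I is generated by a_{3m+1} − a_i·a_{m+i} for 1 ≤ i ≤ m, a_{3m+2} − a_i·a_{2m+i} for 1 ≤ i ≤ m, and all products a_i a_j (1 ≤ i ≤ j ≤ 3m+2) not occurring in the above generators. Then A is a local ℂ-algebra of dimension 3m+3 with Hilbert function (1, 3m, 2). -/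
/-!
Modulo `I`, a product of two variables is `0`, `a_{3m+1}` or `a_{3m+2}`, and these two variables
annihilate every variable. Hence `A` is spanned by `1` and the variables, `𝔪` by the variables,
`𝔪²` by `a_{3m+1}` and `a_{3m+2}`, and `𝔪³ = 0`; evaluation at `0` identifies `A/𝔪` with `ℂ`, and
`𝔪` is the only maximal ideal since it is nilpotent. The variables remain linearly independent in
`A`: each has a linear functional on `ℂ[a]` that vanishes on `I` and, on linear polynomials, reads
off its coefficient.
-/

open MvPolynomial

/-- Index i (as a natural number) viewed in Fin (3m+2); variable a_{i+1} is X (v13 m i). -/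
def v13 (m : ℕ) (i : ℕ) : Fin (3*m+2) := ⟨i % (3*m+2), Nat.mod_lt _ (by omega)⟩

/-- The ideal I generated by a_{3m+1} − aᵢ·a_{m+i} (1 ≤ i ≤ m),
a_{3m+2} − aᵢ·a_{2m+i} (1 ≤ i ≤ m), and all products aᵢaⱼ (1 ≤ i ≤ j ≤ 3m+2) not
occurring in the above generators. (Here aᵢ is the variable X (v13 m (i−1)).) -/
noncomputable def I13 (m : ℕ) : Ideal (MvPolynomial (Fin (3*m+2)) ℂ) :=
  Ideal.span
    ({p | ∃ i : ℕ, i < m ∧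
        p = X (v13 m (3*m)) - X (v13 m i) * X (v13 m (m+i))}
      ∪ {p | ∃ i : ℕ, i < m ∧
        p = X (v13 m (3*m+1)) - X (v13 m i) * X (v13 m (2*m+i))}
      ∪ {p | ∃ i j : ℕ, i ≤ j ∧ j < 3*m+2 ∧
        ¬(i < m ∧ (j = m + i ∨ j = 2*m + i)) ∧ p = X (v13 m i) * X (v13 m j)})

/-- The algebra A = ℂ[a₁,…,a_{3m+2}]/I. -/
noncomputable abbrev A13 (m : ℕ) := MvPolynomial (Fin (3*m+2)) ℂ ⧸ I13 m

/-- The ideal m = (a₁,…,a_{3m+2}) of A. -/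
noncomputable def mm13 (m : ℕ) : Ideal (A13 m) :=
  Ideal.span (Set.range fun i : Fin (3*m+2) => Ideal.Quotient.mk (I13 m) (X i))

open Finsupp

theorem AddMonoidHom.eq_zero_of_mem_ideal_span {R G : Type*} [CommSemiring R] [AddZeroClass G]
    (φ : R →+ G) {S : Set R} (hS : ∀ g ∈ S, ∀ q, φ (q * g) = 0) {p : R}
    (hp : p ∈ Ideal.span S) : φ p = 0 := by
  let J : Ideal R :=
    { carrier := {p | ∀ q, φ (q * p) = 0}
      add_mem' := fun ha hb q => by simp [mul_add, ha q, hb q]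
      zero_mem' := fun q => by simp
      smul_mem' := fun r p hp q => by simpa [mul_assoc] using hp (q * r) }
  simpa using (Ideal.span_le.2 (show S ⊆ J from hS) hp) 1

theorem IsLocalRing.of_isMaximal_of_pow_eq_bot {R : Type*} [CommRing R] {M : Ideal R}
    (hM : M.IsMaximal) {n : ℕ} (h : M ^ n = ⊥) : IsLocalRing R :=
  .of_unique_max_ideal ⟨M, hM, fun _ hJ =>
    (hM.eq_of_le hJ.ne_top (hJ.isPrime.le_of_pow_le (h ▸ bot_le))).symm⟩

theorem Ideal.finrank_quotient_comap_subtype {K A : Type*} [Field K] [CommRing A] [Algebra K A]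
    [FiniteDimensional K A] {I J : Ideal A} (h : J ≤ I) :
    Module.finrank K (I ⧸ Submodule.comap I.subtype J) =
      Module.finrank K I - Module.finrank K J := by
  have : Module.Finite K I := .of_injective (I.subtype.restrictScalars K) Subtype.val_injective
  rw [Submodule.finrank_quotient,
    ((Submodule.comapSubtypeEquivOfLe h).restrictScalars K).finrank_eq]

namespace MvPolynomial
variable {R σ : Type*} [CommSemiring R] (q : MvPolynomial σ R)

theorem coeff_mul_X_mul_X (n : σ →₀ ℕ) (c d : σ) :
    coeff n (q * (X c * X d)) =
      if single c 1 + single d 1 ≤ n then coeff (n - (single c 1 + single d 1)) q else 0 := by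
  rw [X, X, monomial_mul, one_mul, coeff_mul_monomial', mul_one]

theorem coeff_single_mul_X_mul_X (j c d : σ) : coeff (single j 1) (q * (X c * X d)) = 0 := by
  rw [coeff_mul_X_mul_X, if_neg]
  intro h
  simpa using degree_mono h

variable [DecidableEq σ]

theorem coeff_single_mul_X (j c : σ) :
    coeff (single j 1) (q * X c) = if c = j then coeff 0 q else 0 := by
  rw [coeff_mul_X']
  by_cases h : c = j <;> simp [h]

theorem coeff_single_add_single_mul_X {a b c : σ} (ha : c ≠ a) (hb : c ≠ b) :
    coeff (single a 1 + single b 1) (q * X c) = 0 := by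
  rw [coeff_mul_X', if_neg]
  simp [Ne.symm ha, Ne.symm hb]

theorem coeff_single_add_single_mul_X_mul_X (a b c d : σ) :
    coeff (single a 1 + single b 1) (q * (X c * X d)) =
      if c = a ∧ d = b ∨ c = b ∧ d = a then coeff 0 q else 0 := by
  have hle : single c 1 + single d 1 ≤ single a 1 + single b 1 ↔
      single c 1 + single d 1 = single a 1 + single b 1 := by
    refine ⟨fun h => ?_, le_of_eq⟩
    obtain ⟨e, he⟩ := le_iff_exists_add.1 h
    have hdeg := congrArg degree he
    simp only [map_add, degree_single] at hdeg
    rw [he, (degree_eq_zero_iff e).1 (by omega), add_zero]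
  have hpair := hle.trans (single_add_single_eq_single_add_single one_ne_zero one_ne_zero)
  rw [coeff_mul_X_mul_X]
  split_ifs with h h' h'
  · rw [hle.1 h, tsub_self]
  · exact absurd (by simpa using hpair.1 h) h'
  · exact absurd (hpair.2 (by simpa using h')) h
  · rfl

theorem coeff_single_sum_smul_X [Fintype σ] (g : σ → R) (j : σ) :
    coeff (single j 1) (∑ k, g k • (X k : MvPolynomial σ R)) = g j := by
  simp [coeff_sum, coeff_X, single_left_inj]

theorem coeff_single_add_single_sum_smul_X [Fintype σ] (g : σ → R) (a b : σ) :
    coeff (single a 1 + single b 1) (∑ k, g k • (X k : MvPolynomial σ R)) = 0 := by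
  simp only [coeff_sum, coeff_smul, coeff_X]
  refine Finset.sum_eq_zero fun k _ => ?_
  rw [if_neg, smul_zero]
  intro h
  simpa using congrArg degree h

end MvPolynomial

lemma v13_coe (m : ℕ) (k : Fin (3*m+2)) : v13 m k = k := Fin.ext (Nat.mod_eq_of_lt k.isLt)

lemma v13_inj {m a b : ℕ} (ha : a < 3*m+2) (hb : b < 3*m+2) : v13 m a = v13 m b ↔ a = b := by
  simp [v13, Fin.ext_iff, Nat.mod_eq_of_lt ha, Nat.mod_eq_of_lt hb]

namespace I13

lemma coeff_single_eq_zero_of_mem {m j : ℕ} (hj : j < 3*m) {p : MvPolynomial (Fin (3*m+2)) ℂ}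
    (hp : p ∈ I13 m) : coeff (single (v13 m j) 1) p = 0 := by
  refine (lcoeff ℂ (single (v13 m j) 1)).toAddMonoidHom.eq_zero_of_mem_ideal_span ?_ hp
  rintro _ ((⟨i, hi, rfl⟩ | ⟨i, hi, rfl⟩) | ⟨a, b, -, -, -, rfl⟩) q <;>
    simp (disch := omega) [mul_sub, coeff_single_mul_X, coeff_single_mul_X_mul_X, v13_inj] <;>
    omega

/-- For `(o, t) = (m, 3m)` or `(2m, 3m+1)` this vanishes on `I`: it is contraction with the
inverse-system polynomial `y_t + ∑_{i<m} y_i y_{o+i}`, which every generator of `I` annihilates. -/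
noncomputable def quadCoord (m o t : ℕ) : MvPolynomial (Fin (3*m+2)) ℂ →ₗ[ℂ] ℂ :=
  lcoeff ℂ (single (v13 m t) 1) +
    ∑ i ∈ Finset.range m, lcoeff ℂ (single (v13 m i) 1 + single (v13 m (o+i)) 1)

variable {m o t : ℕ} (q : MvPolynomial (Fin (3*m+2)) ℂ)

lemma quadCoord_mul_X {T : ℕ} (hT : 3*m ≤ T) (hT' : T < 3*m+2) (ht : t < 3*m+2) (ho : o ≤ 2*m) :
    quadCoord m o t (q * X (v13 m T)) = if T = t then coeff 0 q else 0 := by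
  simp (disch := omega) only [quadCoord, LinearMap.add_apply, LinearMap.sum_apply,
    lcoeff_apply, coeff_single_mul_X, v13_inj]
  rw [Finset.sum_eq_zero fun i hi => ?_, add_zero]
  rw [Finset.mem_range] at hi
  exact coeff_single_add_single_mul_X _ (by rw [Ne, v13_inj] <;> omega)
    (by rw [Ne, v13_inj] <;> omega)

lemma quadCoord_mul_X_mul_X {a b : ℕ} (hab : a ≤ b) (hb : b < 3*m+2) (ho : 0 < o)
    (ho' : o ≤ 2*m) :
    quadCoord m o t (q * (X (v13 m a) * X (v13 m b))) =
      if a < m ∧ b = o + a then coeff 0 q else 0 := by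
  simp only [quadCoord, LinearMap.add_apply, LinearMap.sum_apply, lcoeff_apply,
    coeff_single_mul_X_mul_X, zero_add, coeff_single_add_single_mul_X_mul_X]
  trans ∑ i ∈ Finset.range m, if a = i then (if b = o + a then coeff 0 q else 0) else 0
  · refine Finset.sum_congr rfl fun i hi => ?_
    rw [Finset.mem_range] at hi
    simp (disch := omega) only [v13_inj]
    split_ifs <;> first | rfl | omega
  · simp [Finset.sum_ite_eq, ite_and]

lemma quadCoord_sum_smul_X (g : Fin (3*m+2) → ℂ) :
    quadCoord m o t (∑ k, g k • X k) = g (v13 m t) := by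
  simp only [quadCoord, LinearMap.add_apply, LinearMap.sum_apply, lcoeff_apply,
    coeff_single_sum_smul_X, coeff_single_add_single_sum_smul_X, Finset.sum_const_zero, add_zero]

lemma quadCoord_eq_zero_of_mem (hm : 0 < m) (h : o = m ∧ t = 3*m ∨ o = 2*m ∧ t = 3*m+1)
    {p : MvPolynomial (Fin (3*m+2)) ℂ} (hp : p ∈ I13 m) : quadCoord m o t p = 0 := by
  have ho : 0 < o ∧ o ≤ 2*m ∧ t < 3*m+2 := by omega
  refine (quadCoord m o t).toAddMonoidHom.eq_zero_of_mem_ideal_span ?_ hp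
  rintro _ ((⟨i, hi, rfl⟩ | ⟨i, hi, rfl⟩) | ⟨a, b, hab, hb, hns, rfl⟩) q <;>
    simp only [LinearMap.toAddMonoidHom_coe, mul_sub, map_sub]
  · rw [quadCoord_mul_X _ le_rfl (by omega) (by omega) (by omega),
      quadCoord_mul_X_mul_X _ (by omega) (by omega) (by omega) (by omega)]
    split_ifs <;> first | omega | simp
  · rw [quadCoord_mul_X _ (by omega) (by omega) (by omega) (by omega),
      quadCoord_mul_X_mul_X _ (by omega) (by omega) (by omega) (by omega)]
    split_ifs <;> first | omega | simp
  · rw [quadCoord_mul_X_mul_X _ hab hb (by omega) (by omega), if_neg]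
    omega

end I13

namespace A13

noncomputable def gen (m : ℕ) (k : Fin (3*m+2)) : A13 m := Ideal.Quotient.mk (I13 m) (X k)

noncomputable def u (m : ℕ) : A13 m := gen m (v13 m (3*m))

noncomputable def v (m : ℕ) : A13 m := gen m (v13 m (3*m+1))

variable {m : ℕ}

open Submodule

lemma gen_mul_gen_eq_zero {a b : ℕ} (hab : a ≤ b) (hb : b < 3*m+2)
    (h : ¬(a < m ∧ (b = m + a ∨ b = 2*m + a))) : gen m (v13 m a) * gen m (v13 m b) = 0 := by
  rw [gen, gen, ← map_mul, Ideal.Quotient.eq_zero_iff_mem]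
  exact Ideal.subset_span (.inr ⟨a, b, hab, hb, h, rfl⟩)

lemma gen_mul_gen_eq_u {i : ℕ} (hi : i < m) : gen m (v13 m i) * gen m (v13 m (m+i)) = u m := by
  rw [gen, gen, ← map_mul, u, gen, Ideal.Quotient.mk_eq_mk_iff_sub_mem, ← neg_sub, neg_mem_iff]
  exact Ideal.subset_span (.inl (.inl ⟨i, hi, rfl⟩))

lemma gen_mul_gen_eq_v {i : ℕ} (hi : i < m) : gen m (v13 m i) * gen m (v13 m (2*m+i)) = v m := by
  rw [gen, gen, ← map_mul, v, gen, Ideal.Quotient.mk_eq_mk_iff_sub_mem, ← neg_sub, neg_mem_iff]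
  exact Ideal.subset_span (.inl (.inr ⟨i, hi, rfl⟩))

lemma gen_mul_gen_mem (i j : Fin (3*m+2)) :
    gen m i * gen m j ∈ Submodule.span ℂ {u m, v m} := by
  wlog hij : (i : ℕ) ≤ j generalizing i j
  · rw [mul_comm (gen m i)]; exact this j i (by omega)
  rw [← v13_coe m i, ← v13_coe m j]
  by_cases h : (i : ℕ) < m ∧ ((j : ℕ) = m + i ∨ (j : ℕ) = 2*m + i)
  · obtain ⟨hi, hj | hj⟩ := h <;> rw [hj]
    · rw [gen_mul_gen_eq_u hi]; exact Submodule.subset_span (by simp)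
    · rw [gen_mul_gen_eq_v hi]; exact Submodule.subset_span (by simp)
  · rw [gen_mul_gen_eq_zero hij j.isLt h]; exact zero_mem _

lemma gen_mul_u (k : Fin (3*m+2)) : gen m k * u m = 0 := by
  rw [u, ← v13_coe m k]
  rcases Nat.lt_or_ge (k : ℕ) (3*m+1) with hk | hk
  · exact gen_mul_gen_eq_zero (by omega) (by omega) (by omega)
  · rw [mul_comm (gen m _)]; exact gen_mul_gen_eq_zero (by omega) k.isLt (by omega)

lemma gen_mul_v (k : Fin (3*m+2)) : gen m k * v m = 0 := by
  rw [v, ← v13_coe m k]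
  exact gen_mul_gen_eq_zero (by omega) (by omega) (by omega)

lemma span_gen_mul_span_gen_le :
    span ℂ (Set.range (gen m)) * span ℂ (Set.range (gen m)) ≤ span ℂ {u m, v m} := by
  rw [span_mul_span, span_le]
  rintro _ ⟨_, ⟨i, rfl⟩, _, ⟨j, rfl⟩, rfl⟩
  exact gen_mul_gen_mem i j

lemma span_gen_mul_span_gen (hm : 0 < m) :
    span ℂ (Set.range (gen m)) * span ℂ (Set.range (gen m)) = span ℂ {u m, v m} := by
  refine le_antisymm span_gen_mul_span_gen_le (span_le.2 ?_)
  rintro _ (rfl | rfl)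
  · rw [← gen_mul_gen_eq_u hm]
    exact mul_mem_mul (subset_span ⟨_, rfl⟩) (subset_span ⟨_, rfl⟩)
  · rw [← gen_mul_gen_eq_v hm]
    exact mul_mem_mul (subset_span ⟨_, rfl⟩) (subset_span ⟨_, rfl⟩)

lemma span_uv_mul_span_gen : span ℂ {u m, v m} * span ℂ (Set.range (gen m)) = ⊥ := by
  rw [span_mul_span, span_eq_bot]
  rintro _ ⟨_, (rfl | rfl), _, ⟨k, rfl⟩, rfl⟩
  · exact (mul_comm _ _).trans (gen_mul_u k)
  · exact (mul_comm _ _).trans (gen_mul_v k)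

lemma span_uv_le_span_gen : span ℂ {u m, v m} ≤ span ℂ (Set.range (gen m)) :=
  span_mono (by rintro _ (rfl | rfl) <;> exact ⟨_, rfl⟩)

lemma mul_mem_span_gen {a b : A13 m} (ha : a ∈ span ℂ (Set.range (gen m)))
    (hb : b ∈ span ℂ (Set.range (gen m))) : a * b ∈ span ℂ (Set.range (gen m)) :=
  span_uv_le_span_gen (span_gen_mul_span_gen_le (mul_mem_mul ha hb))

lemma mem_span_one_gen (a : A13 m) : a ∈ span ℂ (insert 1 (Set.range (gen m))) := by
  obtain ⟨p, rfl⟩ := Ideal.Quotient.mk_surjective a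
  induction p using MvPolynomial.induction_on with
  | C c =>
    refine mem_span_insert.2 ⟨c, 0, zero_mem _, ?_⟩
    rw [add_zero, ← Algebra.algebraMap_eq_smul_one]
    rfl
  | add p q hp hq => rw [map_add]; exact add_mem hp hq
  | mul_X p k hp =>
    obtain ⟨c, z, hz, hp⟩ := mem_span_insert.1 hp
    have hk : gen m k ∈ span ℂ (Set.range (gen m)) := subset_span ⟨k, rfl⟩
    refine mem_span_insert.2 ⟨0, c • gen m k + z * gen m k,
      add_mem (smul_mem _ c hk) (mul_mem_span_gen hz hk), ?_⟩
    rw [map_mul, hp, zero_smul, zero_add, add_mul, smul_one_mul]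
    rfl

lemma restrictScalars_mm13 : (mm13 m).restrictScalars ℂ = span ℂ (Set.range (gen m)) := by
  refine le_antisymm (fun a ha => ?_) (span_le.2 fun _ hk => Ideal.subset_span hk)
  induction ha using Submodule.span_induction with
  | mem a ha => exact subset_span ha
  | zero => exact zero_mem _
  | add a b _ _ ha hb => exact add_mem ha hb
  | smul r a _ ha =>
    obtain ⟨c, z, hz, rfl⟩ := mem_span_insert.1 (mem_span_one_gen r)
    rw [smul_eq_mul, add_mul, smul_one_mul]
    exact add_mem (smul_mem _ c ha) (mul_mem_span_gen hz ha)

lemma restrictScalars_mm13_sq (hm : 0 < m) :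
    (mm13 m ^ 2).restrictScalars ℂ = span ℂ {u m, v m} := by
  rw [restrictScalars_pow two_ne_zero, restrictScalars_mm13, pow_two, span_gen_mul_span_gen hm]

lemma mm13_pow_three (hm : 0 < m) : mm13 m ^ 3 = ⊥ := by
  rw [← restrictScalars_eq_bot_iff ℂ, restrictScalars_pow three_ne_zero, pow_succ,
    ← restrictScalars_pow two_ne_zero, restrictScalars_mm13_sq hm, restrictScalars_mm13,
    span_uv_mul_span_gen]

noncomputable def augmentation (m : ℕ) : A13 m →ₐ[ℂ] ℂ :=
  Ideal.Quotient.liftₐ (I13 m) (aeval 0) fun p hp => by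
    refine (Ideal.span_le (I := RingHom.ker (aeval (0 : Fin (3*m+2) → ℂ)))).2 ?_ hp
    rintro _ ((⟨i, -, rfl⟩ | ⟨i, -, rfl⟩) | ⟨a, b, -, -, -, rfl⟩) <;> simp

lemma augmentation_surjective : Function.Surjective (augmentation m) :=
  fun c => ⟨algebraMap ℂ _ c, (augmentation m).commutes c⟩

lemma ker_augmentation : RingHom.ker (augmentation m) = mm13 m := by
  have hle : mm13 m ≤ RingHom.ker (augmentation m) := by
    refine Ideal.span_le.2 ?_
    rintro _ ⟨k, rfl⟩
    change aeval 0 (X k) = 0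
    simp
  refine le_antisymm (fun a ha => ?_) hle
  obtain ⟨c, z, hz, rfl⟩ := mem_span_insert.1 (mem_span_one_gen a)
  rw [← restrictScalars_mm13, restrictScalars_mem] at hz
  have hc : c = 0 := by
    simpa [RingHom.mem_ker.1 (hle hz)] using RingHom.mem_ker.1 ha
  simpa [hc] using hz

lemma isMaximal_mm13 : (mm13 m).IsMaximal :=
  ker_augmentation ▸ RingHom.ker_isMaximal_of_surjective _ augmentation_surjective

lemma finrank_quotient_mm13 : Module.finrank ℂ (A13 m ⧸ mm13 m) = 1 := by
  rw [← ker_augmentation,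
    (Ideal.quotientKerAlgEquivOfSurjective augmentation_surjective).toLinearEquiv.finrank_eq,
    Module.finrank_self]

instance : FiniteDimensional ℂ (A13 m) :=
  Module.finite_def.2 <| by
    rw [← eq_top_iff.2 fun a _ => mem_span_one_gen (m := m) a]
    exact fg_span (Set.toFinite _)

theorem linearIndependent_gen (hm : 0 < m) : LinearIndependent ℂ (gen m) := by
  refine Fintype.linearIndependent_iff.2 fun g hg k => ?_
  have hP : ∑ k, g k • X k ∈ I13 m := by
    rw [← Ideal.Quotient.eq_zero_iff_mem, ← hg, ← Ideal.Quotient.mkₐ_eq_mk ℂ, map_sum]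
    simp [gen]
  obtain ⟨a, ha, rfl⟩ : ∃ a < 3*m+2, v13 m a = k := ⟨k, k.isLt, v13_coe m k⟩
  obtain ha' | rfl | rfl : a < 3*m ∨ a = 3*m ∨ a = 3*m+1 := by omega
  · simpa [coeff_single_sum_smul_X] using I13.coeff_single_eq_zero_of_mem ha' hP
  · rw [← I13.quadCoord_sum_smul_X (o := m) g]
    exact I13.quadCoord_eq_zero_of_mem hm (.inl ⟨rfl, rfl⟩) hP
  · rw [← I13.quadCoord_sum_smul_X (o := 2*m) g]
    exact I13.quadCoord_eq_zero_of_mem hm (.inr ⟨rfl, rfl⟩) hP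

lemma finrank_mm13 (hm : 0 < m) : Module.finrank ℂ (mm13 m) = 3*m+2 := by
  change Module.finrank ℂ ((mm13 m).restrictScalars ℂ) = _
  rw [restrictScalars_mm13, finrank_span_eq_card (linearIndependent_gen hm), Fintype.card_fin]

lemma finrank_mm13_sq (hm : 0 < m) : Module.finrank ℂ ↥(mm13 m ^ 2) = 2 := by
  change Module.finrank ℂ ((mm13 m ^ 2).restrictScalars ℂ) = _
  have hli : LinearIndependent ℂ ![u m, v m] := by
    have h := (linearIndependent_gen hm).comp ![v13 m (3*m), v13 m (3*m+1)] (by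
      intro i j
      fin_cases i <;> fin_cases j <;> simp [v13_inj])
    convert h using 1
    ext i
    fin_cases i <;> rfl
  rw [restrictScalars_mm13_sq hm, ← Matrix.range_cons_cons_empty, finrank_span_eq_card hli,
    Fintype.card_fin]

lemma finrank_A13 (hm : 0 < m) : Module.finrank ℂ (A13 m) = 3*m+3 := by
  have := Submodule.finrank_quotient (R := ℂ) (mm13 m)
  rw [finrank_quotient_mm13, finrank_mm13 hm] at this
  omega

end A13

/-- A is a local ℂ-algebra of dimension 3m+3 with Hilbert function (1, 3m, 2). -/
theorem stmt13 (m : ℕ) (hm : 1 ≤ m) :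
    IsLocalRing (A13 m) ∧ (mm13 m).IsMaximal ∧
    Module.finrank ℂ (A13 m) = 3*m + 3 ∧
    Module.finrank ℂ (A13 m ⧸ mm13 m) = 1 ∧
    Module.finrank ℂ
      (↥(mm13 m) ⧸ (Submodule.comap (mm13 m).subtype (mm13 m ^ 2))) = 3*m ∧
    Module.finrank ℂ
      (↥(mm13 m ^ 2) ⧸ (Submodule.comap (mm13 m ^ 2).subtype (mm13 m ^ 3))) = 2 := by
  refine ⟨.of_isMaximal_of_pow_eq_bot A13.isMaximal_mm13 (A13.mm13_pow_three hm),
    A13.isMaximal_mm13, A13.finrank_A13 hm, A13.finrank_quotient_mm13, ?_, ?_⟩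
  · rw [Ideal.finrank_quotient_comap_subtype (Ideal.pow_le_self two_ne_zero),
      A13.finrank_mm13 hm, A13.finrank_mm13_sq hm]
    omega
  · rw [Ideal.finrank_quotient_comap_subtype (Ideal.pow_le_pow_right (by norm_num)),
      A13.finrank_mm13_sq hm, A13.mm13_pow_three hm, Module.finrank_zero_of_subsingleton]
end

section
/- If A₁ and A₂ are the apolar algebras of polynomials f₁(x_1,…,x_n) and f₂(y_1,…,y_m) in disjoint sets of variables, then the apolar algebra of the product f₁·f₂ ∈ ℂ[x_1,…,x_n,y_1,…,y_m] is isomorphic as a ℂ-algebra to A₁ ⊗_ℂ A₂. -/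
open MvPolynomial

/-- The action of `g` on `f` as a constant-coefficient differential operator
(`X i` acts as `∂/∂xᵢ`): in terms of monomials,
`∂^d (X^e) = (∏ᵢ (eᵢ)·(eᵢ−1)⋯(eᵢ−dᵢ+1)) · X^(e−d)`. -/
noncomputable def diffOp {σ : Type*} [DecidableEq σ]
    (g f : MvPolynomial σ ℂ) : MvPolynomial σ ℂ :=
  ∑ d ∈ g.support, ∑ e ∈ f.support,
    (g.coeff d * f.coeff e *
        ∏ i ∈ d.support, ((e i).descFactorial (d i) : ℂ))
      • monomial (e - d) (1 : ℂ)

/-- The apolar ideal `f^⊥` of all differential operators annihilating `f`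
(the set is already an ideal, so taking the span is harmless). -/
noncomputable def apolarIdeal {σ : Type*} [DecidableEq σ]
    (f : MvPolynomial σ ℂ) : Ideal (MvPolynomial σ ℂ) :=
  Ideal.span {g | diffOp g f = 0}

/-- The apolar algebra `ℂ[∂] / f^⊥` of `f`. -/
noncomputable abbrev apolarAlgebra {σ : Type*} [DecidableEq σ]
    (f : MvPolynomial σ ℂ) := MvPolynomial σ ℂ ⧸ apolarIdeal f

/-!
Write `S_x`, `S_y`, `S_{x,y}` for the polynomial rings and `Dᵢ g = g(∂) fᵢ`. The action is
multiplicative, `(g h)(∂) f = g(∂) (h(∂) f)`, so `f^⊥` is the kernel of `g ↦ g(∂) f` and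
`Aᵢ = Sᵢ / ker Dᵢ`. Operators and polynomials in disjoint variables act factorwise, so under
`S_{x,y} ≅ S_x ⊗ S_y` the action on `f₁ f₂` becomes `D₁ ⊗ D₂`. Over a field the kernel of a
tensor product of linear maps is `ker D₁ ⊗ S_y + S_x ⊗ ker D₂`, which depends only on the two
kernels; it is therefore also the kernel of `S_x ⊗ S_y → A₁ ⊗ A₂`. Hence the surjection
`S_{x,y} → A₁ ⊗ A₂` has kernel `(f₁ f₂)^⊥`.
-/

open TensorProduct LinearMap

section KerTensorProductMap

variable {K M N N' P Q Q' : Type*} [Field K] [AddCommGroup M] [Module K M]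
  [AddCommGroup N] [Module K N] [AddCommGroup N'] [Module K N']
  [AddCommGroup P] [Module K P] [AddCommGroup Q] [Module K Q] [AddCommGroup Q'] [Module K Q']

theorem TensorProduct.ker_map_eq_sup (f : M →ₗ[K] N) (g : P →ₗ[K] Q) :
    ker (TensorProduct.map f g) =
      range (lTensor M (ker g).subtype) ⊔ range (rTensor P (ker f).subtype) := by
  have hfactor : TensorProduct.map f g =
      TensorProduct.map (range f).subtype (range g).subtype ∘ₗ
        TensorProduct.map f.rangeRestrict g.rangeRestrict := by
    rw [← TensorProduct.map_comp]
    rfl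
  have hinj := TensorProduct.map_injective_of_flat_flat _ _
    (range f).injective_subtype (range g).injective_subtype
  rw [hfactor, ker_comp, ker_eq_bot_of_injective hinj, Submodule.comap_bot,
    TensorProduct.map_ker f.rangeRestrict.exact_subtype_ker_map f.surjective_rangeRestrict
      g.rangeRestrict.exact_subtype_ker_map g.surjective_rangeRestrict,
    ker_rangeRestrict, ker_rangeRestrict]

theorem TensorProduct.ker_map_eq_of_ker_eq {f : M →ₗ[K] N} {f' : M →ₗ[K] N'}
    {g : P →ₗ[K] Q} {g' : P →ₗ[K] Q'} (hf : ker f = ker f') (hg : ker g = ker g') :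
    ker (TensorProduct.map f g) = ker (TensorProduct.map f' g') := by
  rw [ker_map_eq_sup, ker_map_eq_sup, hf, hg]

end KerTensorProductMap

section SplitVariables

variable {R σ τ : Type*} [CommSemiring R]

theorem Finsupp.sumElim_tsub {α : Type*} [AddCommMonoid α] [PartialOrder α]
    [CanonicallyOrderedAdd α] [Sub α] [OrderedSub α] (d₁ e₁ : σ →₀ α) (d₂ e₂ : τ →₀ α) :
    e₁.sumElim e₂ - d₁.sumElim d₂ = (e₁ - d₁).sumElim (e₂ - d₂) := by
  ext (i | j) <;> rfl

theorem MvPolynomial.rename_inl_monomial_mul_rename_inr_monomial (d₁ : σ →₀ ℕ) (d₂ : τ →₀ ℕ)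
    (a b : R) :
    rename Sum.inl (monomial d₁ a) * rename Sum.inr (monomial d₂ b) =
      monomial (d₁.sumElim d₂) (a * b) := by
  rw [rename_monomial, rename_monomial, monomial_mul, Finsupp.sumElim_eq_add]

theorem MvPolynomial.tensorEquivSum_tmul (p : MvPolynomial σ R) (q : MvPolynomial τ R) :
    tensorEquivSum R σ τ R (p ⊗ₜ q) = rename Sum.inl p * rename Sum.inr q := by
  have : (tensorEquivSum R σ τ R).toAlgHom =
      Algebra.TensorProduct.lift (rename Sum.inl) (rename Sum.inr)
        fun _ _ => Commute.all _ _ := by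
    ext i <;> simp
  exact congr($this (p ⊗ₜ q)).trans (by simp)

end SplitVariables

section DiffCoeff

variable {σ τ : Type*}

/-- The coefficient of `X^(e - d)` in `∂^d X^e`. -/
noncomputable def diffCoeff (d e : σ →₀ ℕ) : ℂ :=
  d.prod fun i k => ((e i).descFactorial k : ℂ)

theorem diffCoeff_add_left (d d' e : σ →₀ ℕ) :
    diffCoeff (d + d') e = diffCoeff d (e - d') * diffCoeff d' e := by
  classical
  simp only [diffCoeff]
  rw [Finsupp.prod_of_support_subset _ Finsupp.support_add _ fun i _ => by simp,
    Finsupp.prod_of_support_subset _ Finset.subset_union_left _ fun i _ => by simp,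
    Finsupp.prod_of_support_subset _ Finset.subset_union_right _ fun i _ => by simp,
    ← Finset.prod_mul_distrib]
  refine Finset.prod_congr rfl fun i _ => ?_
  have hsplit : (e i - d' i).descFactorial (d i) * (e i).descFactorial (d' i) =
      (e i).descFactorial (d i + d' i) := by
    simpa using Nat.descFactorial_mul_descFactorial (n := e i) (Nat.le_add_left (d' i) (d i))
  rw [Finsupp.add_apply, Finsupp.tsub_apply, ← Nat.cast_mul, hsplit]

theorem diffCoeff_sumElim (d₁ e₁ : σ →₀ ℕ) (d₂ e₂ : τ →₀ ℕ) :
    diffCoeff (d₁.sumElim d₂) (e₁.sumElim e₂) = diffCoeff d₁ e₁ * diffCoeff d₂ e₂ :=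
  Finsupp.prod_sumElim _ _ _

end DiffCoeff

section DiffOp

variable {σ τ : Type*} [DecidableEq σ] [DecidableEq τ]

theorem diffOp_eq_sum (g f : MvPolynomial σ ℂ) :
    diffOp g f = (AddMonoidAlgebra.coeff g).sum fun d a =>
      (AddMonoidAlgebra.coeff f).sum fun e b => monomial (e - d) (a * b * diffCoeff d e) := by
  simp only [diffOp, MvPolynomial.sum_def, smul_monomial, smul_eq_mul, mul_one]
  rfl

theorem diffOp_add_left (g g' f : MvPolynomial σ ℂ) :
    diffOp (g + g') f = diffOp g f + diffOp g' f := by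
  simp only [diffOp_eq_sum, AddMonoidAlgebra.coeff_add]
  exact Finsupp.sum_add_index' (by simp) fun d a a' => by simp [add_mul, Finsupp.sum_add]

theorem diffOp_add_right (g f f' : MvPolynomial σ ℂ) :
    diffOp g (f + f') = diffOp g f + diffOp g f' := by
  simp only [diffOp_eq_sum, AddMonoidAlgebra.coeff_add, ← Finsupp.sum_add]
  refine Finsupp.sum_congr fun d _ => Finsupp.sum_add_index' (by simp) fun e b b' => ?_
  simp [mul_add, add_mul]

theorem diffOp_smul_left (r : ℂ) (g f : MvPolynomial σ ℂ) :
    diffOp (r • g) f = r • diffOp g f := by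
  simp only [diffOp_eq_sum, AddMonoidAlgebra.coeff_smul]
  rw [Finsupp.sum_smul_index' (by simp), Finsupp.smul_sum]
  refine Finsupp.sum_congr fun d _ => ?_
  simp [Finsupp.smul_sum, smul_monomial, mul_assoc]

theorem diffOp_zero_right (g : MvPolynomial σ ℂ) : diffOp g 0 = 0 := by
  simp [diffOp_eq_sum]

theorem diffOp_monomial_monomial (d e : σ →₀ ℕ) (a b : ℂ) :
    diffOp (monomial d a) (monomial e b) = monomial (e - d) (a * b * diffCoeff d e) := by
  rw [diffOp_eq_sum, sum_monomial_eq (by simp), sum_monomial_eq (by simp)]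

theorem diffOp_mul (g h f : MvPolynomial σ ℂ) :
    diffOp (g * h) f = diffOp g (diffOp h f) := by
  induction g using MvPolynomial.induction_on' with
  | add p q hp hq => rw [add_mul, diffOp_add_left, hp, hq, diffOp_add_left]
  | monomial d a =>
  induction h using MvPolynomial.induction_on' with
  | add p q hp hq => rw [mul_add, diffOp_add_left, hp, hq, diffOp_add_left, diffOp_add_right]
  | monomial d' a' =>
  induction f using MvPolynomial.induction_on' with
  | add p q hp hq => rw [diffOp_add_right, diffOp_add_right, hp, hq, diffOp_add_right]
  | monomial e b =>
    rw [monomial_mul, diffOp_monomial_monomial, diffOp_monomial_monomial,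
      diffOp_monomial_monomial, diffCoeff_add_left, tsub_tsub, add_comm d']
    ring_nf

theorem diffOp_rename_mul (g₁ f₁ : MvPolynomial σ ℂ) (g₂ f₂ : MvPolynomial τ ℂ) :
    diffOp (rename Sum.inl g₁ * rename Sum.inr g₂) (rename Sum.inl f₁ * rename Sum.inr f₂) =
      rename Sum.inl (diffOp g₁ f₁) * rename Sum.inr (diffOp g₂ f₂) := by
  induction g₁ using MvPolynomial.induction_on' with
  | add p q hp hq => simp only [map_add, add_mul, diffOp_add_left, hp, hq]
  | monomial d₁ a₁ =>
  induction g₂ using MvPolynomial.induction_on' with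
  | add p q hp hq => simp only [map_add, mul_add, diffOp_add_left, hp, hq]
  | monomial d₂ a₂ =>
  induction f₁ using MvPolynomial.induction_on' with
  | add p q hp hq => simp only [map_add, add_mul, diffOp_add_right, hp, hq]
  | monomial e₁ b₁ =>
  induction f₂ using MvPolynomial.induction_on' with
  | add p q hp hq => simp only [map_add, mul_add, diffOp_add_right, hp, hq]
  | monomial e₂ b₂ =>
    simp only [rename_inl_monomial_mul_rename_inr_monomial, diffOp_monomial_monomial,
      Finsupp.sumElim_tsub, diffCoeff_sumElim]
    ring_nf

theorem mem_apolarIdeal {f g : MvPolynomial σ ℂ} : g ∈ apolarIdeal f ↔ diffOp g f = 0 := by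
  refine ⟨fun hg => ?_, fun hg => Ideal.subset_span hg⟩
  induction hg using Submodule.span_induction with
  | mem x hx => exact hx
  | zero => simp [diffOp_eq_sum]
  | add x y _ _ hx hy => rw [diffOp_add_left, hx, hy, add_zero]
  | smul c x _ hx => rw [smul_eq_mul, diffOp_mul, hx, diffOp_zero_right]

noncomputable def diffOpLinear (f : MvPolynomial σ ℂ) :
    MvPolynomial σ ℂ →ₗ[ℂ] MvPolynomial σ ℂ where
  toFun g := diffOp g f
  map_add' g g' := diffOp_add_left g g' f
  map_smul' r g := diffOp_smul_left r g f

theorem ker_diffOpLinear (f : MvPolynomial σ ℂ) :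
    ker (diffOpLinear f) = ker (Ideal.Quotient.mkₐ ℂ (apolarIdeal f)).toLinearMap := by
  ext g
  simp [diffOpLinear, Ideal.Quotient.eq_zero_iff_mem, mem_apolarIdeal]

variable (f₁ : MvPolynomial σ ℂ) (f₂ : MvPolynomial τ ℂ)

theorem tensorEquivSum_map_diffOpLinear (x : MvPolynomial σ ℂ ⊗[ℂ] MvPolynomial τ ℂ) :
    tensorEquivSum ℂ σ τ ℂ (TensorProduct.map (diffOpLinear f₁) (diffOpLinear f₂) x) =
      diffOp (tensorEquivSum ℂ σ τ ℂ x) (rename Sum.inl f₁ * rename Sum.inr f₂) := by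
  induction x using TensorProduct.induction_on with
  | zero => simp [diffOp_eq_sum]
  | tmul g₁ g₂ => simp [tensorEquivSum_tmul, diffOpLinear, diffOp_rename_mul]
  | add x y hx hy => simp only [map_add, hx, hy, diffOp_add_left]

noncomputable def apolarTensorMap :
    MvPolynomial (σ ⊕ τ) ℂ →ₐ[ℂ] apolarAlgebra f₁ ⊗[ℂ] apolarAlgebra f₂ :=
  (Algebra.TensorProduct.map (Ideal.Quotient.mkₐ ℂ _) (Ideal.Quotient.mkₐ ℂ _)).comp
    (tensorEquivSum ℂ σ τ ℂ).symm.toAlgHom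

theorem apolarTensorMap_surjective : Function.Surjective (apolarTensorMap f₁ f₂) :=
  (Algebra.TensorProduct.map_surjective _ _ (Ideal.Quotient.mkₐ_surjective ℂ _)
    (Ideal.Quotient.mkₐ_surjective ℂ _)).comp (tensorEquivSum ℂ σ τ ℂ).symm.surjective

theorem ker_apolarTensorMap :
    RingHom.ker (apolarTensorMap f₁ f₂) = apolarIdeal (rename Sum.inl f₁ * rename Sum.inr f₂) := by
  have hker := TensorProduct.ker_map_eq_of_ker_eq (ker_diffOpLinear f₁) (ker_diffOpLinear f₂)
  ext g
  rw [RingHom.mem_ker, mem_apolarIdeal]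
  let e := tensorEquivSum ℂ σ τ ℂ
  calc apolarTensorMap f₁ f₂ g = 0
      ↔ e.symm g ∈ ker (TensorProduct.map (Ideal.Quotient.mkₐ ℂ (apolarIdeal f₁)).toLinearMap
          (Ideal.Quotient.mkₐ ℂ (apolarIdeal f₂)).toLinearMap) := Iff.rfl
    _ ↔ e (TensorProduct.map (diffOpLinear f₁) (diffOpLinear f₂) (e.symm g)) = 0 := by
      rw [← hker, mem_ker, map_eq_zero_iff e e.injective]
    _ ↔ diffOp g (rename Sum.inl f₁ * rename Sum.inr f₂) = 0 := by
      rw [tensorEquivSum_map_diffOpLinear, AlgEquiv.apply_symm_apply]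

noncomputable def apolarAlgebraMulEquivTensor :
    apolarAlgebra (rename Sum.inl f₁ * rename Sum.inr f₂ : MvPolynomial (σ ⊕ τ) ℂ) ≃ₐ[ℂ]
      apolarAlgebra f₁ ⊗[ℂ] apolarAlgebra f₂ :=
  (Ideal.quotientEquivAlgOfEq ℂ (ker_apolarTensorMap f₁ f₂).symm).trans
    (Ideal.quotientKerAlgEquivOfSurjective (apolarTensorMap_surjective f₁ f₂))

end DiffOp

/-- If A₁, A₂ are the apolar algebras of f₁(x₁,…,xₙ), f₂(y₁,…,y_m) in disjoint sets
of variables, then the apolar algebra of f₁·f₂ is isomorphic to A₁ ⊗_ℂ A₂. -/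
theorem stmt14 (n m : ℕ) (f₁ : MvPolynomial (Fin n) ℂ) (f₂ : MvPolynomial (Fin m) ℂ) :
    Nonempty
      (apolarAlgebra (rename Sum.inl f₁ * rename Sum.inr f₂ :
          MvPolynomial (Fin n ⊕ Fin m) ℂ)
        ≃ₐ[ℂ] TensorProduct ℂ (apolarAlgebra f₁) (apolarAlgebra f₂)) :=
  ⟨apolarAlgebraMulEquivTensor f₁ f₂⟩
end

section
/- The apolar algebra of the monomial x·y ∈ ℂ[x,y] is isomorphic to ℂ[u,v]/(u², v²), which is isomorphic to ℂ[x]/(x²) ⊗_ℂ ℂ[x]/(x²), and its multiplication tensor is the Coppersmith–Winograd tensor T_{CW,2}. -/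
open MvPolynomial

/-- The algebra ℂ[x]/(x²). -/
noncomputable abbrev dualNumbers := Polynomial ℂ ⧸
  Ideal.span ({Polynomial.X ^ 2} : Set (Polynomial ℂ))

/-- The 4-dimensional algebra whose multiplication tensor is T_{CW,2}: generated by
a₁ = X 0, a₂ = X 1 with a₁² = a₂² (= a₃), a₁a₂ = 0, a₁³ = 0 (hence all products of
a₁, a₂, a₃ other than a₁² = a₂² = a₃ vanish). -/
noncomputable abbrev CW2Algebra := MvPolynomial (Fin 2) ℂ ⧸
  Ideal.span ({X 0 ^ 2 - X 1 ^ 2, X 0 * X 1, X 0 ^ 3} : Set (MvPolynomial (Fin 2) ℂ))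

/-!
For a monomial `x^e`, the operator `∂^d` sends `x^e` to a nonzero multiple of `x^(e-d)` when
`d ≤ e` and kills it otherwise. Since `d ↦ e - d` is injective on `{d ≤ e}`, an operator kills
`x^e` exactly when none of its monomials divides `x^e`, so `(x^e)^⊥ = (∂ᵢ^(eᵢ+1))`; for `xy`
this is `(u², v²)`. The presentation `ℂ[u,v]/(u², v²)` of `ℂ[u]/(u²) ⊗ ℂ[v]/(v²)` is the
universal property of the tensor product. Finally the substitution `a₁ = u + v`,
`a₂ = i(u - v)` turns `u² = v² = 0` into `a₁² = a₂²`, `a₁a₂ = 0`, `a₁³ = 0`, and it is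
invertible because `2` and `i` are units of `ℂ`.
-/

open TensorProduct

section ApolarMonomial

variable {σ : Type*}

lemma prod_descFactorial_eq_zero_iff (d e : σ →₀ ℕ) :
    ∏ i ∈ d.support, ((e i).descFactorial (d i) : ℂ) = 0 ↔ ¬ d ≤ e := by
  simp only [Finset.prod_eq_zero_iff, Nat.cast_eq_zero, Nat.descFactorial_eq_zero_iff_lt,
    Finsupp.mem_support_iff, Finsupp.le_def, not_forall, not_le]
  exact ⟨fun ⟨i, _, hi⟩ => ⟨i, hi⟩, fun ⟨i, hi⟩ => ⟨i, by omega, hi⟩⟩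

variable [DecidableEq σ]

lemma diffOp_monomial_right (g : MvPolynomial σ ℂ) (e : σ →₀ ℕ) {c : ℂ} (hc : c ≠ 0) :
    diffOp g (monomial e c) = ∑ d ∈ g.support,
      (g.coeff d * c * ∏ i ∈ d.support, ((e i).descFactorial (d i) : ℂ)) • monomial (e - d) 1 := by
  simp [diffOp, support_monomial, hc]

lemma coeff_tsub_diffOp_monomial (g : MvPolynomial σ ℂ) {d e : σ →₀ ℕ} (hd : d ≤ e) {c : ℂ}
    (hc : c ≠ 0) :
    coeff (e - d) (diffOp g (monomial e c)) =
      g.coeff d * c * ∏ i ∈ d.support, ((e i).descFactorial (d i) : ℂ) := by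
  rw [diffOp_monomial_right g e hc, coeff_sum, Finset.sum_eq_single d]
  · simp
  · intro b _ hbd
    rw [coeff_smul, coeff_monomial]
    split_ifs with h
    · have hb : ¬ b ≤ e := fun hb =>
        hbd (by rw [← tsub_tsub_cancel_of_le hb, h, tsub_tsub_cancel_of_le hd])
      rw [(prod_descFactorial_eq_zero_iff b e).mpr hb, mul_zero, zero_smul]
    · exact smul_zero _
  · intro hd'
    rw [notMem_support_iff.mp hd']
    simp

lemma diffOp_monomial_eq_zero_iff (g : MvPolynomial σ ℂ) (e : σ →₀ ℕ) {c : ℂ} (hc : c ≠ 0) :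
    diffOp g (monomial e c) = 0 ↔ ∀ d ∈ g.support, ¬ d ≤ e := by
  constructor
  · intro h d hd hde
    have hcoeff := coeff_tsub_diffOp_monomial g hde hc
    rw [h, coeff_zero, eq_comm] at hcoeff
    simp only [mul_eq_zero, prod_descFactorial_eq_zero_iff] at hcoeff
    exact hcoeff.elim (·.elim (mem_support_iff.mp hd) hc) (· hde)
  · intro h
    rw [diffOp_monomial_right g e hc]
    refine Finset.sum_eq_zero fun d hd => ?_
    rw [(prod_descFactorial_eq_zero_iff d e).mpr (h d hd), mul_zero, zero_smul]

theorem apolarIdeal_monomial (e : σ →₀ ℕ) {c : ℂ} (hc : c ≠ 0) :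
    apolarIdeal (monomial e c) = Ideal.span (Set.range fun i => X i ^ (e i + 1)) := by
  have hgens : (Set.range fun i => (X i ^ (e i + 1) : MvPolynomial σ ℂ)) =
      (fun s => monomial s 1) '' Set.range fun i => Finsupp.single i (e i + 1) := by
    simp only [X_pow_eq_monomial, ← Set.range_comp, Function.comp_def]
  have hmem (g : MvPolynomial σ ℂ) :
      g ∈ Ideal.span (Set.range fun i => X i ^ (e i + 1)) ↔ diffOp g (monomial e c) = 0 := by
    rw [hgens, mem_ideal_span_monomial_image, diffOp_monomial_eq_zero_iff g e hc]
    simp only [Set.exists_range_iff, Finsupp.single_le_iff, Nat.add_one_le_iff]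
    simp only [Finsupp.le_def, not_forall, not_le]
  refine le_antisymm (Ideal.span_le.mpr fun g hg => (hmem g).mpr hg) ?_
  exact Ideal.span_le.mpr fun g hg => Ideal.subset_span ((hmem g).mp (Ideal.subset_span hg))

end ApolarMonomial

theorem apolarIdeal_X_mul_X :
    apolarIdeal (X 0 * X 1 : MvPolynomial (Fin 2) ℂ) =
      Ideal.span ({X 0 ^ 2, X 1 ^ 2} : Set (MvPolynomial (Fin 2) ℂ)) := by
  have hmonomial : (X 0 * X 1 : MvPolynomial (Fin 2) ℂ) =
      monomial (Finsupp.single 0 1 + Finsupp.single 1 1) 1 := by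
    rw [X, X, monomial_mul, mul_one]
  rw [hmonomial, apolarIdeal_monomial _ one_ne_zero]
  congr 1
  ext p
  simp [Fin.exists_fin_two, eq_comm]

section QuotientLift

variable {R σ A : Type*} [CommRing R] [CommRing A] [Algebra R A]

lemma Ideal.Quotient.mk_span_eq_zero {S : Set A} {s : A} (hs : s ∈ S) :
    Ideal.Quotient.mk (Ideal.span S) s = 0 :=
  Ideal.Quotient.eq_zero_iff_mem.mpr (Ideal.subset_span hs)

noncomputable def liftQuotientSpan (x : σ → A) (S : Set (MvPolynomial σ R))
    (h : ∀ s ∈ S, aeval x s = 0) : MvPolynomial σ R ⧸ Ideal.span S →ₐ[R] A :=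
  Ideal.Quotient.liftₐ _ (aeval x) fun _ ha =>
    Ideal.span_le.mpr (fun s hs => RingHom.mem_ker.mpr (h s hs)) ha

@[simp]
lemma liftQuotientSpan_mk (x : σ → A) (S : Set (MvPolynomial σ R))
    (h : ∀ s ∈ S, aeval x s = 0) (p : MvPolynomial σ R) :
    liftQuotientSpan x S h (Ideal.Quotient.mk _ p) = aeval x p :=
  rfl

lemma quotient_algHom_ext {I : Ideal (MvPolynomial σ R)} {f g : MvPolynomial σ R ⧸ I →ₐ[R] A}
    (h : ∀ i, f (Ideal.Quotient.mk I (X i)) = g (Ideal.Quotient.mk I (X i))) : f = g :=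
  Ideal.Quotient.algHom_ext R (MvPolynomial.algHom_ext h)

lemma aeval_mk_X_eq_zero {S : Set (MvPolynomial σ R)} (i : σ) {r : Polynomial R}
    (hr : Polynomial.aeval (X i) r ∈ S) :
    Polynomial.aeval (Ideal.Quotient.mk (Ideal.span S) (X i)) r = 0 := by
  rw [← Ideal.Quotient.mkₐ_eq_mk R, Polynomial.aeval_algHom_apply, Ideal.Quotient.mkₐ_eq_mk]
  exact Ideal.Quotient.mk_span_eq_zero hr

end QuotientLift

section TensorAdjoinRoot

variable {R : Type*} [CommRing R] (p q : Polynomial R)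

noncomputable def adjoinRootTensorToQuotient : AdjoinRoot p ⊗[R] AdjoinRoot q →ₐ[R]
    MvPolynomial (Fin 2) R ⧸ Ideal.span
      ({Polynomial.aeval (X 0) p, Polynomial.aeval (X 1) q} : Set (MvPolynomial (Fin 2) R)) :=
  Algebra.TensorProduct.lift
    (AdjoinRoot.liftAlgHom p (Algebra.ofId R _) (Ideal.Quotient.mk _ (X 0)) (by
      rw [Algebra.toRingHom_ofId, ← Polynomial.aeval_def]
      exact aeval_mk_X_eq_zero 0 (by simp)))
    (AdjoinRoot.liftAlgHom q (Algebra.ofId R _) (Ideal.Quotient.mk _ (X 1)) (by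
      rw [Algebra.toRingHom_ofId, ← Polynomial.aeval_def]
      exact aeval_mk_X_eq_zero 1 (by simp)))
    fun _ _ => Commute.all _ _

noncomputable def quotientToAdjoinRootTensor :
    MvPolynomial (Fin 2) R ⧸ Ideal.span
      ({Polynomial.aeval (X 0) p, Polynomial.aeval (X 1) q} : Set (MvPolynomial (Fin 2) R))
      →ₐ[R] AdjoinRoot p ⊗[R] AdjoinRoot q :=
  liftQuotientSpan ![AdjoinRoot.root p ⊗ₜ 1, 1 ⊗ₜ AdjoinRoot.root q] _ (by
    have hp := Polynomial.aeval_algHom_apply (Algebra.TensorProduct.includeLeft (R := R)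
      (S := R) (A := AdjoinRoot p) (B := AdjoinRoot q)) (AdjoinRoot.root p) p
    have hq := Polynomial.aeval_algHom_apply (Algebra.TensorProduct.includeRight (R := R)
      (A := AdjoinRoot p) (B := AdjoinRoot q)) (AdjoinRoot.root q) q
    simp only [AdjoinRoot.aeval_eq, AdjoinRoot.mk_self, map_zero] at hp hq
    simp only [Set.mem_insert_iff, Set.mem_singleton_iff, forall_eq_or_imp, forall_eq,
      ← Polynomial.aeval_algHom_apply, aeval_X]
    exact ⟨hp, hq⟩)

noncomputable def adjoinRootTensorEquivQuotient :
    AdjoinRoot p ⊗[R] AdjoinRoot q ≃ₐ[R] MvPolynomial (Fin 2) R ⧸ Ideal.span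
      ({Polynomial.aeval (X 0) p, Polynomial.aeval (X 1) q} : Set (MvPolynomial (Fin 2) R)) :=
  AlgEquiv.ofAlgHom (adjoinRootTensorToQuotient p q) (quotientToAdjoinRootTensor p q)
    (quotient_algHom_ext <| Fin.forall_fin_two.mpr <| by
      simp [adjoinRootTensorToQuotient, quotientToAdjoinRootTensor])
    (Algebra.TensorProduct.ext
      (AdjoinRoot.algHom_ext (by simp [adjoinRootTensorToQuotient, quotientToAdjoinRootTensor]))
      (AdjoinRoot.algHom_ext (by simp [adjoinRootTensorToQuotient, quotientToAdjoinRootTensor])))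

end TensorAdjoinRoot

lemma span_aeval_X_sq :
    Ideal.span ({Polynomial.aeval (X 0) (Polynomial.X ^ 2 : Polynomial ℂ),
      Polynomial.aeval (X 1) (Polynomial.X ^ 2 : Polynomial ℂ)} : Set (MvPolynomial (Fin 2) ℂ)) =
      Ideal.span ({X 0 ^ 2, X 1 ^ 2} : Set (MvPolynomial (Fin 2) ℂ)) := by
  simp

-- `dualNumbers` is `AdjoinRoot (X ^ 2)` by definition.
noncomputable def quotientXSqEquivTensor :
    (MvPolynomial (Fin 2) ℂ ⧸ Ideal.span ({X 0 ^ 2, X 1 ^ 2} : Set (MvPolynomial (Fin 2) ℂ)))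
      ≃ₐ[ℂ] dualNumbers ⊗[ℂ] dualNumbers :=
  (Ideal.quotientEquivAlgOfEq ℂ span_aeval_X_sq.symm).trans
    (adjoinRootTensorEquivQuotient (Polynomial.X ^ 2) (Polynomial.X ^ 2)).symm

section Substitution

variable {A : Type*} [CommRing A] [Algebra ℂ A]

lemma algebraMap_I_sq : algebraMap ℂ A Complex.I ^ 2 = -1 := by
  rw [← map_pow, Complex.I_sq, map_neg, map_one]

lemma algebraMap_inv_two_mul_two : algebraMap ℂ A 2⁻¹ * 2 = 1 := by
  rw [← map_ofNat (algebraMap ℂ A) 2, ← map_mul, inv_mul_cancel₀ two_ne_zero, map_one]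

lemma cw2_relations_of_sq_eq_zero {u v : A} (hu : u ^ 2 = 0) (hv : v ^ 2 = 0) :
    (u + v) ^ 2 - (algebraMap ℂ A Complex.I * (u - v)) ^ 2 = 0 ∧
      (u + v) * (algebraMap ℂ A Complex.I * (u - v)) = 0 ∧ (u + v) ^ 3 = 0 := by
  have hi : algebraMap ℂ A Complex.I ^ 2 = -1 := algebraMap_I_sq
  refine ⟨?_, ?_, ?_⟩
  · linear_combination 2 * hu + 2 * hv - (u - v) ^ 2 * hi
  · linear_combination algebraMap ℂ A Complex.I * (hu - hv)
  · linear_combination (u + 3 * v) * hu + (3 * u + v) * hv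

lemma sq_eq_zero_of_cw2_relations {a b : A} (hab : a ^ 2 - b ^ 2 = 0) (hab' : a * b = 0) :
    (algebraMap ℂ A 2⁻¹ * (a - algebraMap ℂ A Complex.I * b)) ^ 2 = 0 ∧
      (algebraMap ℂ A 2⁻¹ * (a + algebraMap ℂ A Complex.I * b)) ^ 2 = 0 := by
  have hi : algebraMap ℂ A Complex.I ^ 2 = -1 := algebraMap_I_sq
  set h := algebraMap ℂ A 2⁻¹
  set i := algebraMap ℂ A Complex.I
  constructor
  · linear_combination h ^ 2 * hab - 2 * h ^ 2 * i * hab' + h ^ 2 * b ^ 2 * hi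
  · linear_combination h ^ 2 * hab + 2 * h ^ 2 * i * hab' + h ^ 2 * b ^ 2 * hi

lemma cw2_substitution_leftInverse (u v : A) :
    algebraMap ℂ A 2⁻¹ * (u + v - algebraMap ℂ A Complex.I * (algebraMap ℂ A Complex.I * (u - v)))
      = u ∧
    algebraMap ℂ A 2⁻¹ * (u + v + algebraMap ℂ A Complex.I * (algebraMap ℂ A Complex.I * (u - v)))
      = v := by
  have hi : algebraMap ℂ A Complex.I ^ 2 = -1 := algebraMap_I_sq
  have hh : algebraMap ℂ A 2⁻¹ * 2 = 1 := algebraMap_inv_two_mul_two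
  constructor
  · linear_combination (-algebraMap ℂ A 2⁻¹ * (u - v)) * hi + u * hh
  · linear_combination (algebraMap ℂ A 2⁻¹ * (u - v)) * hi + v * hh

lemma cw2_substitution_rightInverse (a b : A) :
    algebraMap ℂ A 2⁻¹ * (a - algebraMap ℂ A Complex.I * b) +
      algebraMap ℂ A 2⁻¹ * (a + algebraMap ℂ A Complex.I * b) = a ∧
    algebraMap ℂ A Complex.I * (algebraMap ℂ A 2⁻¹ * (a - algebraMap ℂ A Complex.I * b) -
      algebraMap ℂ A 2⁻¹ * (a + algebraMap ℂ A Complex.I * b)) = b := by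
  have hi : algebraMap ℂ A Complex.I ^ 2 = -1 := algebraMap_I_sq
  have hh : algebraMap ℂ A 2⁻¹ * 2 = 1 := algebraMap_inv_two_mul_two
  constructor
  · linear_combination a * hh
  · linear_combination (-2 * algebraMap ℂ A 2⁻¹ * b) * hi + b * hh

end Substitution

noncomputable def cw2ToQuotientXSq : CW2Algebra →ₐ[ℂ]
    MvPolynomial (Fin 2) ℂ ⧸ Ideal.span ({X 0 ^ 2, X 1 ^ 2} : Set (MvPolynomial (Fin 2) ℂ)) :=
  liftQuotientSpan ![Ideal.Quotient.mk _ (X 0) + Ideal.Quotient.mk _ (X 1),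
    algebraMap ℂ _ Complex.I * (Ideal.Quotient.mk _ (X 0) - Ideal.Quotient.mk _ (X 1))] _ (by
    have hu := Ideal.Quotient.mk_span_eq_zero
      (S := ({X 0 ^ 2, X 1 ^ 2} : Set (MvPolynomial (Fin 2) ℂ))) (s := X 0 ^ 2) (by simp)
    have hv := Ideal.Quotient.mk_span_eq_zero
      (S := ({X 0 ^ 2, X 1 ^ 2} : Set (MvPolynomial (Fin 2) ℂ))) (s := X 1 ^ 2) (by simp)
    rw [map_pow] at hu hv
    simpa only [Set.mem_insert_iff, Set.mem_singleton_iff, forall_eq_or_imp, forall_eq,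
      map_sub, map_mul, map_pow, aeval_X, Matrix.cons_val_zero, Matrix.cons_val_one]
      using cw2_relations_of_sq_eq_zero hu hv)

noncomputable def quotientXSqToCW2 :
    MvPolynomial (Fin 2) ℂ ⧸ Ideal.span ({X 0 ^ 2, X 1 ^ 2} : Set (MvPolynomial (Fin 2) ℂ))
      →ₐ[ℂ] CW2Algebra :=
  liftQuotientSpan ![algebraMap ℂ _ 2⁻¹ *
      (Ideal.Quotient.mk _ (X 0) - algebraMap ℂ _ Complex.I * Ideal.Quotient.mk _ (X 1)),
    algebraMap ℂ _ 2⁻¹ *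
      (Ideal.Quotient.mk _ (X 0) + algebraMap ℂ _ Complex.I * Ideal.Quotient.mk _ (X 1))] _ (by
    have hab := Ideal.Quotient.mk_span_eq_zero (S := ({X 0 ^ 2 - X 1 ^ 2, X 0 * X 1, X 0 ^ 3} :
      Set (MvPolynomial (Fin 2) ℂ))) (s := X 0 ^ 2 - X 1 ^ 2) (by simp)
    have hab' := Ideal.Quotient.mk_span_eq_zero (S := ({X 0 ^ 2 - X 1 ^ 2, X 0 * X 1, X 0 ^ 3} :
      Set (MvPolynomial (Fin 2) ℂ))) (s := X 0 * X 1) (by simp)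
    rw [map_sub, map_pow, map_pow] at hab
    rw [map_mul] at hab'
    simpa only [Set.mem_insert_iff, Set.mem_singleton_iff, forall_eq_or_imp, forall_eq,
      map_pow, aeval_X, Matrix.cons_val_zero, Matrix.cons_val_one]
      using sq_eq_zero_of_cw2_relations hab hab')

noncomputable def cw2EquivQuotientXSq : CW2Algebra ≃ₐ[ℂ]
    MvPolynomial (Fin 2) ℂ ⧸ Ideal.span ({X 0 ^ 2, X 1 ^ 2} : Set (MvPolynomial (Fin 2) ℂ)) :=
  AlgEquiv.ofAlgHom cw2ToQuotientXSq quotientXSqToCW2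
    (quotient_algHom_ext <| Fin.forall_fin_two.mpr <| by
      simpa only [cw2ToQuotientXSq, quotientXSqToCW2, AlgHom.coe_comp, Function.comp_apply,
        liftQuotientSpan_mk, aeval_X, Matrix.cons_val_zero, Matrix.cons_val_one, map_add, map_sub,
        map_mul, AlgHom.commutes, AlgHom.coe_id, id_eq] using cw2_substitution_leftInverse _ _)
    (quotient_algHom_ext <| Fin.forall_fin_two.mpr <| by
      simpa only [cw2ToQuotientXSq, quotientXSqToCW2, AlgHom.coe_comp, Function.comp_apply,
        liftQuotientSpan_mk, aeval_X, Matrix.cons_val_zero, Matrix.cons_val_one, map_add, map_sub,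
        map_mul, AlgHom.commutes, AlgHom.coe_id, id_eq] using cw2_substitution_rightInverse _ _)

/-- The apolar algebra of x·y is isomorphic to ℂ[u,v]/(u²,v²), which is isomorphic
to ℂ[x]/(x²) ⊗_ℂ ℂ[x]/(x²); and its multiplication tensor is the
Coppersmith–Winograd tensor T_{CW,2}, i.e. it is isomorphic to the algebra
corresponding to T_{CW,2}. -/
theorem stmt15 :
    Nonempty (apolarAlgebra (X 0 * X 1 : MvPolynomial (Fin 2) ℂ)
      ≃ₐ[ℂ] (MvPolynomial (Fin 2) ℂ ⧸
        Ideal.span ({X 0 ^ 2, X 1 ^ 2} : Set (MvPolynomial (Fin 2) ℂ)))) ∧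
    Nonempty ((MvPolynomial (Fin 2) ℂ ⧸
        Ideal.span ({X 0 ^ 2, X 1 ^ 2} : Set (MvPolynomial (Fin 2) ℂ)))
      ≃ₐ[ℂ] TensorProduct ℂ dualNumbers dualNumbers) ∧
    Nonempty (apolarAlgebra (X 0 * X 1 : MvPolynomial (Fin 2) ℂ)
      ≃ₐ[ℂ] CW2Algebra) :=
  ⟨⟨Ideal.quotientEquivAlgOfEq ℂ apolarIdeal_X_mul_X⟩, ⟨quotientXSqEquivTensor⟩,
    ⟨(Ideal.quotientEquivAlgOfEq ℂ apolarIdeal_X_mul_X).trans cw2EquivQuotientXSq.symm⟩⟩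
end
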